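/- Let < be a monomial preorder, Q an ideal of k[X], and I an ideal of k[X]_< := S_<^{-1}k[X] where S_< = {u : L_<(u) = 1}. Then (a) L_<(Q k[X]_<) = L_<(Q), and (b) L_<(I ∩ k[X]) = L_<(I). -/

import Mathlib

open MvPolynomial

structure MonomialPreorder (n : ℕ) where
  lt : (Fin n →₀ ℕ) → (Fin n →₀ ℕ) → Prop
  irrefl : ∀ a, ¬ lt a a
  trans : ∀ {a b c}, lt a b → lt b c → lt a c
  weak : ∀ {a b c}, (¬ lt a b ∧ ¬ lt b a) → (¬ lt b c ∧ ¬ lt c b) → ¬ lt a c ∧ ¬ lt c a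
  compat : ∀ {a b} (c), lt a b → lt (a + c) (b + c)
  cancel : ∀ {a b} (c), lt (a + c) (b + c) → lt a b

variable {n : ℕ} {k : Type*} [Field k]

open Classical in
noncomputable def leadingPart (P : MonomialPreorder n) (f : MvPolynomial (Fin n) k) :
    MvPolynomial (Fin n) k :=
  ∑ a ∈ f.support.filter (fun a => ∀ b ∈ f.support, ¬ P.lt a b),
    monomial a (coeff a f)

namespace MPAux

variable {P : MonomialPreorder n}

/-- Incomparability. -/
def sim (P : MonomialPreorder n) (a b : Fin n →₀ ℕ) : Prop := ¬ P.lt a b ∧ ¬ P.lt b a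

lemma sim_refl (a : Fin n →₀ ℕ) : sim P a a := ⟨P.irrefl a, P.irrefl a⟩

lemma sim_symm {a b} (h : sim P a b) : sim P b a := ⟨h.2, h.1⟩

lemma sim_trans {a b c} (h1 : sim P a b) (h2 : sim P b c) : sim P a c := P.weak h1 h2

lemma lt_of_sim_of_lt {a b c} (hs : sim P a b) (hlt : P.lt b c) : P.lt a c := by
  by_contra h
  rcases Classical.em (P.lt c a) with h' | h'
  · exact hs.2 (P.trans hlt h')
  · exact (sim_trans (sim_symm hs) (⟨h, h'⟩ : sim P a c)).1 hlt

lemma lt_of_lt_of_sim {a b c} (hlt : P.lt a b) (hs : sim P b c) : P.lt a c := by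
  by_contra h
  rcases Classical.em (P.lt c a) with h' | h'
  · exact hs.2 (P.trans h' hlt)
  · exact (sim_trans (⟨h, h'⟩ : sim P a c) (sim_symm hs)).1 hlt

/-- `lt` composed with `le` (where `le x y := ¬ lt y x`). -/
lemma lt_of_lt_of_nlt {a b c} (hab : P.lt a b) (hcb : ¬ P.lt c b) : P.lt a c := by
  by_contra h
  rcases Classical.em (P.lt c a) with h' | h'
  · exact hcb (P.trans h' hab)
  · exact hcb (lt_of_sim_of_lt (⟨h', h⟩ : sim P c a) hab)

lemma nlt_trans {a b c} (h1 : ¬ P.lt b a) (h2 : ¬ P.lt c b) : ¬ P.lt c a :=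
  fun h => h2 (lt_of_lt_of_nlt h h1)

lemma sim_add {a b} (c) (h : sim P a b) : sim P (a + c) (b + c) :=
  ⟨fun h' => h.1 (P.cancel c h'), fun h' => h.2 (P.cancel c h')⟩

lemma nlt_add {a b} (c) (h : ¬ P.lt a b) : ¬ P.lt (a + c) (b + c) :=
  fun h' => h (P.cancel c h')

end MPAux

open MPAux

open Classical in
noncomputable def maxSet (P : MonomialPreorder n) (f : MvPolynomial (Fin n) k) :
    Finset (Fin n →₀ ℕ) := f.support.filter (fun a => ∀ b ∈ f.support, ¬ P.lt a b)

lemma leadingPart_eq (P : MonomialPreorder n) (f : MvPolynomial (Fin n) k) :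
    leadingPart P f = ∑ a ∈ maxSet P f, monomial a (coeff a f) := rfl

lemma mem_maxSet {P : MonomialPreorder n} {f : MvPolynomial (Fin n) k} {a : Fin n →₀ ℕ} :
    a ∈ maxSet P f ↔ a ∈ f.support ∧ ∀ b ∈ f.support, ¬ P.lt a b := by
  classical
  simp [maxSet]

lemma coeff_leadingPart (P : MonomialPreorder n) (f : MvPolynomial (Fin n) k) (c : Fin n →₀ ℕ) :
    coeff c (leadingPart P f) = if c ∈ maxSet P f then coeff c f else 0 := by
  classical
  rw [leadingPart_eq, MvPolynomial.coeff_sum]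
  simp [MvPolynomial.coeff_monomial, Finset.sum_ite_eq']

lemma exists_max_rel {α : Type*} (r : α → α → Prop)
    (htr : ∀ {a b c}, r a b → r b c → r a c) (hir : ∀ a, ¬ r a a) (s : Finset α)
    (hs : s.Nonempty) : ∃ a ∈ s, ∀ b ∈ s, ¬ r a b := by
  classical
  induction s using Finset.induction_on with
  | empty => exact absurd hs (by simp)
  | @insert a s ha ih =>
    rcases s.eq_empty_or_nonempty with rfl | hs'
    · exact ⟨a, by simp, by simp [hir]⟩
    · obtain ⟨m, hm, hmax⟩ := ih hs'
      by_cases hma : r m a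
      · refine ⟨a, Finset.mem_insert_self _ _, ?_⟩
        intro b hb
        rcases Finset.mem_insert.mp hb with rfl | hb
        · exact hir b
        · exact fun h => hmax b hb (htr hma h)
      · refine ⟨m, Finset.mem_insert_of_mem hm, ?_⟩
        intro b hb
        rcases Finset.mem_insert.mp hb with rfl | hb
        · exact hma
        · exact hmax b hb

lemma maxSet_nonempty {P : MonomialPreorder n} {f : MvPolynomial (Fin n) k} (hf : f ≠ 0) :
    (maxSet P f).Nonempty := by
  obtain ⟨a, ha, hmax⟩ := exists_max_rel P.lt (fun h h' => P.trans h h') P.irrefl f.support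
    (by simpa using hf)
  exact ⟨a, mem_maxSet.mpr ⟨ha, hmax⟩⟩

lemma sim_of_mem_maxSet {P : MonomialPreorder n} {f : MvPolynomial (Fin n) k} {a b : Fin n →₀ ℕ}
    (ha : a ∈ maxSet P f) (hb : b ∈ maxSet P f) : sim P a b :=
  ⟨(mem_maxSet.mp ha).2 b (mem_maxSet.mp hb).1, (mem_maxSet.mp hb).2 a (mem_maxSet.mp ha).1⟩

lemma leadingPart_zero (P : MonomialPreorder n) : leadingPart P (0 : MvPolynomial (Fin n) k) = 0 := by
  rw [leadingPart_eq]
  have : maxSet P (0 : MvPolynomial (Fin n) k) = ∅ := by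
    classical
    simp [maxSet]
  simp [this]

lemma leadingPart_ne_zero {P : MonomialPreorder n} {f : MvPolynomial (Fin n) k} (hf : f ≠ 0) :
    leadingPart P f ≠ 0 := by
  obtain ⟨a, ha⟩ := maxSet_nonempty (P := P) hf
  intro h
  have := coeff_leadingPart P f a
  rw [h, if_pos ha] at this
  exact (MvPolynomial.mem_support_iff.mp (mem_maxSet.mp ha).1) this.symm

lemma leadingPart_one (P : MonomialPreorder n) : leadingPart P (1 : MvPolynomial (Fin n) k) = 1 := by
  classical
  have hs : (1 : MvPolynomial (Fin n) k).support = {0} := by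
    rw [show (1 : MvPolynomial (Fin n) k) = monomial 0 1 from rfl]
    rw [MvPolynomial.support_monomial, if_neg one_ne_zero]
  have hm : maxSet P (1 : MvPolynomial (Fin n) k) = {0} := by
    simp only [maxSet, hs]
    refine Finset.filter_true_of_mem ?_
    intro a ha b hb
    simp only [Finset.mem_singleton] at ha hb
    subst ha; subst hb; exact P.irrefl 0
  rw [leadingPart_eq, hm]
  simp

lemma lex_cancel_helper {a b a0 b0 : Fin n →₀ ℕ} (hle_a : toLex a ≤ toLex a0)
    (hle_b : toLex b ≤ toLex b0) (habc : a + b = a0 + b0) : a = a0 ∧ b = b0 := by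
  have haa0 : a = a0 := by
    by_contra hne'
    have h : toLex a < toLex a0 := lt_of_le_of_ne hle_a (fun h => hne' (toLex.injective h))
    have h1 : toLex (a + b) < toLex (a0 + b) := add_lt_add_left h (toLex b)
    have h2 : toLex (a0 + b) ≤ toLex (a0 + b0) := add_le_add_right hle_b (toLex a0)
    have := lt_of_lt_of_le h1 h2
    rw [habc] at this
    exact lt_irrefl _ this
  subst haa0
  exact ⟨rfl, add_left_cancel habc⟩

lemma leadingPart_mul (P : MonomialPreorder n) {f g : MvPolynomial (Fin n) k}
    (hf : f ≠ 0) (hg : g ≠ 0) :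
    leadingPart P (f * g) = leadingPart P f * leadingPart P g := by
  classical
  obtain ⟨af, haf⟩ := maxSet_nonempty (P := P) hf
  obtain ⟨ag, hag⟩ := maxSet_nonempty (P := P) hg
  -- K0 : everything in supp f + supp g is ≤ af + ag
  have K0 : ∀ a ∈ f.support, ∀ b ∈ g.support, ¬ P.lt (af + ag) (a + b) := by
    intro a ha b hb
    have h1 : ¬ P.lt af a := (mem_maxSet.mp haf).2 a ha
    have h2 : ¬ P.lt ag b := (mem_maxSet.mp hag).2 b hb
    have h1' : ¬ P.lt (af + ag) (a + ag) := nlt_add ag h1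
    have h2' : ¬ P.lt (a + ag) (a + b) := by
      have := nlt_add (P := P) a h2
      rwa [add_comm ag a, add_comm b a] at this
    exact nlt_trans h2' h1'
  -- membership in maxSet from nonzero coefficient of leadingPart
  have memL : ∀ (h : MvPolynomial (Fin n) k) (c : Fin n →₀ ℕ),
      coeff c (leadingPart P h) ≠ 0 → c ∈ maxSet P h := by
    intro h c hc
    rw [coeff_leadingPart] at hc
    by_contra hmem
    rw [if_neg hmem] at hc
    exact hc rfl
  -- K2 : coefficients in the top class agree
  have K2 : ∀ c, sim P (af + ag) c →
      coeff c (f * g) = coeff c (leadingPart P f * leadingPart P g) := by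
    intro c hc
    rw [MvPolynomial.coeff_mul, MvPolynomial.coeff_mul]
    refine Finset.sum_congr rfl ?_
    rintro ⟨a, b⟩ hab
    have habc : a + b = c := Finset.HasAntidiagonal.mem_antidiagonal.mp hab
    rw [coeff_leadingPart, coeff_leadingPart]
    by_cases ha : a ∈ maxSet P f
    · by_cases hb : b ∈ maxSet P g
      · rw [if_pos ha, if_pos hb]
      · rw [if_neg hb, mul_zero]
        by_cases hbs : coeff b g = 0
        · rw [hbs, mul_zero]
        · exfalso
          have hbsup : b ∈ g.support := MvPolynomial.mem_support_iff.mpr hbs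
          have hasup : a ∈ f.support := (mem_maxSet.mp ha).1
          obtain ⟨d, hd, hbd⟩ : ∃ d ∈ g.support, P.lt b d := by
            by_contra h
            push_neg at h
            exact hb (mem_maxSet.mpr ⟨hbsup, h⟩)
          have hlt : P.lt (a + b) (a + d) := by
            have := P.compat a hbd
            rwa [add_comm b a, add_comm d a] at this
          have : P.lt (a + b) (af + ag) := lt_of_lt_of_nlt hlt (K0 a hasup d hd)
          rw [habc] at this
          exact hc.2 this
    · rw [if_neg ha, zero_mul]
      by_cases has : coeff a f = 0
      · rw [has, zero_mul]
      · by_cases hbs : coeff b g = 0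
        · rw [hbs, mul_zero]
        · exfalso
          have hasup : a ∈ f.support := MvPolynomial.mem_support_iff.mpr has
          have hbsup : b ∈ g.support := MvPolynomial.mem_support_iff.mpr hbs
          obtain ⟨d, hd, had⟩ : ∃ d ∈ f.support, P.lt a d := by
            by_contra h
            push_neg at h
            exact ha (mem_maxSet.mpr ⟨hasup, h⟩)
          have hlt : P.lt (a + b) (d + b) := P.compat b had
          have : P.lt (a + b) (af + ag) := lt_of_lt_of_nlt hlt (K0 d hd b hbsup)
          rw [habc] at this
          exact hc.2 this
  -- lex-maximal elements of the top classes
  obtain ⟨a0, ha0, ha0max⟩ := exists_max_rel (fun x y : Fin n →₀ ℕ => toLex x < toLex y)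
    (fun h h' => lt_trans h h') (fun a => lt_irrefl _) (maxSet P f)
    (maxSet_nonempty (P := P) hf)
  obtain ⟨b0, hb0, hb0max⟩ := exists_max_rel (fun x y : Fin n →₀ ℕ => toLex x < toLex y)
    (fun h h' => lt_trans h h') (fun a => lt_irrefl _) (maxSet P g)
    (maxSet_nonempty (P := P) hg)
  -- K4 : the coefficient of Lf * Lg at a0 + b0
  have K4 : coeff (a0 + b0) (leadingPart P f * leadingPart P g) = coeff a0 f * coeff b0 g := by
    rw [MvPolynomial.coeff_mul]
    rw [Finset.sum_eq_single ((a0, b0) : (Fin n →₀ ℕ) × (Fin n →₀ ℕ))]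
    · rw [coeff_leadingPart, coeff_leadingPart, if_pos ha0, if_pos hb0]
    · rintro ⟨a, b⟩ hab hne
      by_contra h0
      have hca : coeff a (leadingPart P f) ≠ 0 := fun h => h0 (by rw [h, zero_mul])
      have hcb : coeff b (leadingPart P g) ≠ 0 := fun h => h0 (by rw [h, mul_zero])
      have ha : a ∈ maxSet P f := memL f a hca
      have hb : b ∈ maxSet P g := memL g b hcb
      have hle_a : toLex a ≤ toLex a0 := not_lt.mp (ha0max a ha)
      have hle_b : toLex b ≤ toLex b0 := not_lt.mp (hb0max b hb)
      have habc : a + b = a0 + b0 := Finset.HasAntidiagonal.mem_antidiagonal.mp hab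
      obtain ⟨e1, e2⟩ := lex_cancel_helper hle_a hle_b habc
      exact hne (by rw [e1, e2])
    · intro h
      exact (h (Finset.HasAntidiagonal.mem_antidiagonal.mpr rfl)).elim
  -- K5 : a0 + b0 is in the top class
  have K5 : sim P (af + ag) (a0 + b0) := by
    have s1 : sim P (af + ag) (a0 + ag) := sim_add ag (sim_of_mem_maxSet haf ha0)
    have s2 : sim P (a0 + ag) (a0 + b0) := by
      have := sim_add (P := P) a0 (sim_of_mem_maxSet hag hb0)
      rwa [add_comm ag a0, add_comm b0 a0] at this
    exact sim_trans s1 s2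
  have hc0 : coeff (a0 + b0) (f * g) ≠ 0 := by
    rw [K2 _ K5, K4]
    exact mul_ne_zero (MvPolynomial.mem_support_iff.mp (mem_maxSet.mp ha0).1)
      (MvPolynomial.mem_support_iff.mp (mem_maxSet.mp hb0).1)
  -- K1 : everything in the support of f * g is ≤ af + ag
  have K1 : ∀ c ∈ (f * g).support, ¬ P.lt (af + ag) c := by
    intro c hc
    have := MvPolynomial.support_mul f g hc
    rw [Finset.mem_add] at this
    obtain ⟨a, ha, b, hb, rfl⟩ := this
    exact K0 a ha b hb
  -- K7 : characterization of maxSet (f * g)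
  have K7 : ∀ c, c ∈ maxSet P (f * g) ↔ c ∈ (f * g).support ∧ sim P (af + ag) c := by
    intro c
    constructor
    · intro hcm
      obtain ⟨hcs, hcmax⟩ := mem_maxSet.mp hcm
      refine ⟨hcs, K1 c hcs, ?_⟩
      intro hlt
      exact hcmax (a0 + b0) (MvPolynomial.mem_support_iff.mpr hc0)
        (lt_of_lt_of_sim hlt K5)
    · rintro ⟨hcs, hsim⟩
      refine mem_maxSet.mpr ⟨hcs, ?_⟩
      intro d hd hltd
      exact hsim.2 (lt_of_lt_of_nlt hltd (K1 d hd))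
  -- conclude
  ext c
  rw [coeff_leadingPart]
  by_cases hsim : sim P (af + ag) c
  · by_cases hcm : c ∈ maxSet P (f * g)
    · rw [if_pos hcm, K2 c hsim]
    · rw [if_neg hcm]
      have : c ∉ (f * g).support := fun h => hcm ((K7 c).mpr ⟨h, hsim⟩)
      have hz : coeff c (f * g) = 0 := not_ne_iff.mp (fun h => this (MvPolynomial.mem_support_iff.mpr h))
      rw [← K2 c hsim, hz]
  · have hcm : c ∉ maxSet P (f * g) := fun h => hsim ((K7 c).mp h).2
    rw [if_neg hcm]
    symm
    rw [MvPolynomial.coeff_mul]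
    refine Finset.sum_eq_zero ?_
    rintro ⟨a, b⟩ hab
    by_contra h0
    have ha : a ∈ maxSet P f := memL f a (fun h => h0 (by rw [h, zero_mul]))
    have hb : b ∈ maxSet P g := memL g b (fun h => h0 (by rw [h, mul_zero]))
    have : sim P (af + ag) (a + b) := by
      have s1 : sim P (af + ag) (a + ag) := sim_add ag (sim_of_mem_maxSet haf ha)
      have s2 : sim P (a + ag) (a + b) := by
        have := sim_add (P := P) a (sim_of_mem_maxSet hag hb)
        rwa [add_comm ag a, add_comm b a] at this
      exact sim_trans s1 s2
    rw [Finset.HasAntidiagonal.mem_antidiagonal.mp hab] at this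
    exact hsim this

lemma ne_zero_of_leadingPart_eq_one {P : MonomialPreorder n} {u : MvPolynomial (Fin n) k}
    (hu : leadingPart P u = 1) : u ≠ 0 := by
  rintro rfl
  rw [leadingPart_zero] at hu
  exact one_ne_zero hu.symm

noncomputable def Sles (k : Type*) [Field k] (P : MonomialPreorder n) : Submonoid (MvPolynomial (Fin n) k) :=
  Submonoid.closure {u | leadingPart P u = 1}

abbrev Loc (k : Type*) [Field k] (P : MonomialPreorder n) := Localization (Sles k P)

noncomputable def leadingIdealWrt (P Q : MonomialPreorder n) (G : Set (Loc k P)) :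
    Ideal (MvPolynomial (Fin n) k) :=
  Ideal.span {q | ∃ f ∈ G, ∃ u p : MvPolynomial (Fin n) k, leadingPart P u = 1 ∧
    algebraMap (MvPolynomial (Fin n) k) (Loc k P) p = algebraMap (MvPolynomial (Fin n) k) (Loc k P) u * f ∧
    q = leadingPart Q p}

noncomputable def leadingIdeal (P : MonomialPreorder n) (G : Set (Loc k P)) :
    Ideal (MvPolynomial (Fin n) k) := leadingIdealWrt P P G

noncomputable def leadingIdealPoly (P : MonomialPreorder n) (Q : Set (MvPolynomial (Fin n) k)) :
    Ideal (MvPolynomial (Fin n) k) :=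
  Ideal.span (leadingPart P '' Q)

lemma leadingPart_eq_one_of_mem_Sles {P : MonomialPreorder n} {s : MvPolynomial (Fin n) k}
    (hs : s ∈ Sles k P) : leadingPart P s = 1 := by
  induction hs using Submonoid.closure_induction with
  | mem x hx => exact hx
  | one => exact leadingPart_one P
  | mul x y hx hy ihx ihy =>
    rw [leadingPart_mul P (ne_zero_of_leadingPart_eq_one ihx)
      (ne_zero_of_leadingPart_eq_one ihy), ihx, ihy, one_mul]

lemma leadingPart_mul_Sles {P : MonomialPreorder n} {s p : MvPolynomial (Fin n) k}
    (hs : s ∈ Sles k P) : leadingPart P (p * s) = leadingPart P p := by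
  rcases eq_or_ne p 0 with rfl | hp
  · rw [zero_mul]
  · rw [leadingPart_mul P hp (ne_zero_of_leadingPart_eq_one (leadingPart_eq_one_of_mem_Sles hs)),
      leadingPart_eq_one_of_mem_Sles hs, mul_one]

lemma Sles_le_nonZeroDivisors (P : MonomialPreorder n) :
    Sles k P ≤ nonZeroDivisors (MvPolynomial (Fin n) k) := fun s hs =>
  mem_nonZeroDivisors_of_ne_zero (ne_zero_of_leadingPart_eq_one
    (leadingPart_eq_one_of_mem_Sles hs))


/-- For an ideal Q of k[X] and an ideal I of k[X]_<:
(a) L_<(Q k[X]_<) = L_<(Q), and (b) L_<(I ∩ k[X]) = L_<(I). -/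
theorem leadingIdeal_extension_contraction (n : ℕ) (k : Type*) [Field k]
    (P : MonomialPreorder n) (Q : Ideal (MvPolynomial (Fin n) k)) (I : Ideal (Loc k P)) :
    leadingIdeal P ((Ideal.map (algebraMap (MvPolynomial (Fin n) k) (Loc k P)) Q :
        Ideal (Loc k P)) : Set (Loc k P)) = leadingIdealPoly P (Q : Set (MvPolynomial (Fin n) k)) ∧
    leadingIdealPoly P ((Ideal.comap (algebraMap (MvPolynomial (Fin n) k) (Loc k P)) I :
        Ideal (MvPolynomial (Fin n) k)) : Set (MvPolynomial (Fin n) k)) =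
      leadingIdeal P (I : Set (Loc k P)) := by
  have hinj : Function.Injective (algebraMap (MvPolynomial (Fin n) k) (Loc k P)) :=
    IsLocalization.injective (Loc k P) (Sles_le_nonZeroDivisors P)
  constructor
  · apply le_antisymm
    · rw [leadingIdeal, leadingIdealWrt, Ideal.span_le]
      rintro q ⟨f, hf, u, p, hu, hup, rfl⟩
      rcases eq_or_ne p 0 with rfl | hp
      · rw [leadingPart_zero]
        exact (leadingIdealPoly P (Q : Set (MvPolynomial (Fin n) k))).zero_mem
      obtain ⟨⟨⟨q', hq'⟩, s⟩, hx⟩ :=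
        (IsLocalization.mem_map_algebraMap_iff (Sles k P) (Loc k P)).mp hf
      have heq : algebraMap (MvPolynomial (Fin n) k) (Loc k P) (p * (s : MvPolynomial (Fin n) k)) =
          algebraMap (MvPolynomial (Fin n) k) (Loc k P) (u * q') := by
        rw [map_mul, map_mul, hup, mul_assoc, hx]
      have hpq : p * (s : MvPolynomial (Fin n) k) = u * q' := hinj heq
      have hmem : p * (s : MvPolynomial (Fin n) k) ∈ Q := hpq ▸ Q.mul_mem_left u hq'
      have hlp : leadingPart P p = leadingPart P (p * (s : MvPolynomial (Fin n) k)) :=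
        (leadingPart_mul_Sles s.2).symm
      rw [hlp]
      exact Ideal.subset_span ⟨p * (s : MvPolynomial (Fin n) k), hmem, rfl⟩
    · rw [leadingIdealPoly, Ideal.span_le]
      rintro q ⟨q', hq', rfl⟩
      apply Ideal.subset_span
      exact ⟨algebraMap _ _ q', Ideal.mem_map_of_mem _ hq', 1, q', leadingPart_one P,
        by rw [map_one, one_mul], rfl⟩
  · apply le_antisymm
    · rw [leadingIdealPoly, Ideal.span_le]
      rintro q ⟨q', hq', rfl⟩
      apply Ideal.subset_span
      exact ⟨algebraMap _ _ q', hq', 1, q', leadingPart_one P,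
        by rw [map_one, one_mul], rfl⟩
    · rw [leadingIdeal, leadingIdealWrt, Ideal.span_le]
      rintro q ⟨f, hf, u, p, hu, hup, rfl⟩
      apply Ideal.subset_span
      refine ⟨p, ?_, rfl⟩
      have : algebraMap (MvPolynomial (Fin n) k) (Loc k P) p ∈ I := by
        rw [hup]
        exact I.mul_mem_left _ hf
      exact this
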